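/- arXiv:2310.20359 — 2 statements merged into one kernel-verified Lean document; each statement's English description precedes it below -/
import Mathlib

section
/- Let 𝒜 be a MAD family on ω such that Ψ(𝒜) is almost compact (a Mrówka family), and let X be obtained from Ψ(𝒜) by replacing each isolated point by a Cantor set. Then X is almost compact: of any two disjoint zero-sets of X, at least one is compact. -/
open Set

/-- An almost disjoint family on `ω`: an infinite family of infinite subsets of `ℕ`
with pairwise finite intersections. -/
def AlmostDisjointFamily (𝒜 : Set (Set ℕ)) : Prop :=
  𝒜.Infinite ∧ (∀ A ∈ 𝒜, A.Infinite) ∧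
    ∀ A ∈ 𝒜, ∀ B ∈ 𝒜, A ≠ B → (A ∩ B).Finite

/-- The Cantor set `{0,1}^ℕ`. -/
abbrev CantorK : Type := ℕ → Bool

/-- The underlying set of the Ψ-space `Ψ(𝒜) = ω ∪ 𝒜`. -/
def PsiSpace (𝒜 : Set (Set ℕ)) : Type := ℕ ⊕ ↥𝒜

/-- The Ψ-space topology: points of `ω` are isolated and the sets
`{A} ∪ {m ∈ A : m ≥ n}` form a neighborhood base at `A ∈ 𝒜`. -/
instance PsiSpace.topology (𝒜 : Set (Set ℕ)) : TopologicalSpace (PsiSpace 𝒜) :=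
  TopologicalSpace.generateFrom
    ({s | ∃ n : ℕ, s = {Sum.inl n}} ∪
     {s | ∃ (A : ↥𝒜) (n : ℕ),
        s = insert (Sum.inr A) (Sum.inl '' {m | m ∈ (A : Set ℕ) ∧ n ≤ m})})

/-- The underlying set of the space `X` obtained from `Ψ(𝒜)` by replacing each
point `n ∈ ω` by a copy `{n} × K` of the Cantor set. -/
def PsiX (𝒜 : Set (Set ℕ)) : Type := (ℕ × CantorK) ⊕ ↥𝒜

/-- The topology of `X`: basic open sets are the sets `{n} × C` with `C` open in the
Cantor set, and the sets `U_n(A) = {A} ∪ ⋃ {{m} × K : m ∈ A, m ≥ n}`. -/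
instance PsiX.topology (𝒜 : Set (Set ℕ)) : TopologicalSpace (PsiX 𝒜) :=
  TopologicalSpace.generateFrom
    ({s | ∃ (n : ℕ) (C : Set CantorK), IsOpen C ∧
        s = Sum.inl '' ({n} ×ˢ C)} ∪
     {s | ∃ (A : ↥𝒜) (n : ℕ),
        s = insert (Sum.inr A)
          (Sum.inl '' {p : ℕ × CantorK | p.1 ∈ (A : Set ℕ) ∧ n ≤ p.1})})

/-- The collapsing map `f : X → Ψ(𝒜)` sending each `{n} × K` to `n` and fixing `𝒜`. -/
def psiCollapse (𝒜 : Set (Set ℕ)) : PsiX 𝒜 → PsiSpace 𝒜 :=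
  Sum.map Prod.fst id

/-- A MAD family: a maximal almost disjoint family on `ω`. -/
def MadFamily (𝒜 : Set (Set ℕ)) : Prop :=
  AlmostDisjointFamily 𝒜 ∧ ∀ S : Set ℕ, S.Infinite → ∃ A ∈ 𝒜, (S ∩ A).Infinite

/-- A zero-set: the preimage of `0` under a continuous real-valued function. -/
def IsZeroSet {Y : Type*} [TopologicalSpace Y] (Z : Set Y) : Prop :=
  ∃ ξ : Y → ℝ, Continuous ξ ∧ Z = ξ ⁻¹' {0}

/-!
The collapse `f : X → Ψ(𝒜)` is perfect, and every `c : ℕ → K` gives a continuous section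
`n ↦ (n, c n)` of it. Choosing `c n` in `Z` whenever the `n`-th fibre meets `Z` turns `f '' Z`
into the preimage of `Z` under a section, so `f` maps zero-sets to zero-sets.

For disjoint zero-sets `Z₀, Z₁` of `X`, the images `W₀, W₁` can only meet in `ω`, because the
fibres over `𝒜` are points. So `W₀ ∩ W₁` is a closed subset of `ω`, finite by maximality of `𝒜`
(an infinite one would accumulate at some `A ∈ 𝒜`), and clopen. Hence `W₀ \ W₁` and `W₁ \ W₀`
are disjoint zero-sets of `Ψ(𝒜)`; if `W₀ \ W₁` is compact then so is `W₀`, and `Z₀` is compact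
as a closed subset of `f⁻¹(W₀)`.
-/

open TopologicalSpace

namespace IsZeroSet

variable {X Y : Type*} [TopologicalSpace X] [TopologicalSpace Y]

theorem isClosed {Z : Set X} (hZ : IsZeroSet Z) : IsClosed Z := by
  obtain ⟨ξ, hξ, rfl⟩ := hZ
  exact isClosed_singleton.preimage hξ

theorem preimage {Z : Set Y} (hZ : IsZeroSet Z) {f : X → Y} (hf : Continuous f) :
    IsZeroSet (f ⁻¹' Z) := by
  obtain ⟨ξ, hξ, rfl⟩ := hZ
  exact ⟨ξ ∘ f, hξ.comp hf, rfl⟩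

theorem sdiff {Z : Set X} (hZ : IsZeroSet Z) {D : Set X} (hD : IsClopen D) :
    IsZeroSet (Z \ D) := by
  classical
  obtain ⟨ξ, hξ, rfl⟩ := hZ
  refine ⟨D.piecewise 1 ξ, continuous_const.piecewise (by simp [hD.frontier_eq]) hξ, ?_⟩
  ext x
  by_cases hx : x ∈ D <;> simp [hx]

end IsZeroSet

theorem isCompact_of_isCompact_sdiff {X : Type*} [TopologicalSpace X] {s t : Set X}
    (h : IsCompact (s \ t)) (ht : (s ∩ t).Finite) : IsCompact s := by
  rw [← Set.sdiff_union_inter s t]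
  exact h.union ht.isCompact

theorem IsProperMap.isCompact_of_isCompact_image {X Y : Type*} [TopologicalSpace X]
    [TopologicalSpace Y] {f : X → Y} (hf : IsProperMap f) {Z : Set X} (hZ : IsClosed Z)
    (h : IsCompact (f '' Z)) : IsCompact Z :=
  (hf.isCompact_preimage h).of_isClosed_subset hZ (Set.subset_preimage_image f Z)

namespace PsiSpace

variable {𝒜 : Set (Set ℕ)}

def basicNhd (A : ↥𝒜) (n : ℕ) : Set (PsiSpace 𝒜) :=
  insert (Sum.inr A) (Sum.inl '' {m | m ∈ (A : Set ℕ) ∧ n ≤ m})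

theorem isOpen_singleton_inl (n : ℕ) : IsOpen ({Sum.inl n} : Set (PsiSpace 𝒜)) :=
  isOpen_generateFrom_of_mem (Or.inl ⟨n, rfl⟩)

theorem isOpen_basicNhd (A : ↥𝒜) (n : ℕ) : IsOpen (basicNhd A n) :=
  isOpen_generateFrom_of_mem (Or.inr ⟨A, n, rfl⟩)

theorem isOpen_of_subset_range_inl {S : Set (PsiSpace 𝒜)} (hS : S ⊆ Set.range Sum.inl) :
    IsOpen S := by
  refine isOpen_iff_forall_mem_open.2 fun y hy => ?_
  obtain ⟨n, rfl⟩ := hS hy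
  exact ⟨{Sum.inl n}, Set.singleton_subset_iff.2 hy, isOpen_singleton_inl n, rfl⟩

theorem basicNhd_antitone (A : ↥𝒜) : Antitone (basicNhd A) := by
  intro m n hmn
  exact Set.insert_subset_insert (Set.image_mono fun k hk => ⟨hk.1, hmn.trans hk.2⟩)

theorem exists_basicNhd_subset {A : ↥𝒜} {V : Set (PsiSpace 𝒜)} (hV : IsOpen V)
    (hA : Sum.inr A ∈ V) : ∃ n, basicNhd A n ⊆ V := by
  change GenerateOpen _ V at hV
  induction hV with
  | basic s hs =>
    rcases hs with ⟨n, rfl⟩ | ⟨B, n, rfl⟩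
    · exact absurd (Set.mem_singleton_iff.1 hA) Sum.inr_ne_inl
    · rcases hA with h | ⟨m, -, h⟩
      · obtain rfl : A = B := Sum.inr_injective h
        exact ⟨n, subset_rfl⟩
      · exact absurd h Sum.inl_ne_inr
  | univ => exact ⟨0, Set.subset_univ _⟩
  | inter s t _ _ ihs iht =>
    obtain ⟨m, hm⟩ := ihs hA.1
    obtain ⟨n, hn⟩ := iht hA.2
    exact ⟨max m n, Set.subset_inter ((basicNhd_antitone A (le_max_left m n)).trans hm)
      ((basicNhd_antitone A (le_max_right m n)).trans hn)⟩
  | sUnion S _ ih =>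
    obtain ⟨s, hs, hAs⟩ := hA
    obtain ⟨n, hn⟩ := ih s hs hAs
    exact ⟨n, hn.trans (Set.subset_sUnion_of_mem hs)⟩

theorem finite_of_isClosed_of_subset_range_inl
    (hmax : ∀ T : Set ℕ, T.Infinite → ∃ A ∈ 𝒜, (T ∩ A).Infinite)
    {S : Set (PsiSpace 𝒜)} (hS : IsClosed S) (hSω : S ⊆ Set.range Sum.inl) : S.Finite := by
  by_contra hinf
  have hT : (Sum.inl ⁻¹' S : Set ℕ).Infinite := fun hfin =>
    hinf (by rw [← Set.image_preimage_eq_of_subset hSω]; exact hfin.image _)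
  obtain ⟨A, hA, hTA⟩ := hmax _ hT
  obtain ⟨n, hn⟩ := exists_basicNhd_subset (A := ⟨A, hA⟩) hS.isOpen_compl fun h => by
    obtain ⟨m, hm⟩ := hSω h
    exact Sum.inl_ne_inr hm
  obtain ⟨k, ⟨hkS, hkA⟩, hnk⟩ := hTA.exists_gt n
  exact hn (Or.inr ⟨k, ⟨hkA, hnk.le⟩, rfl⟩) hkS

end PsiSpace

def psiSection {𝒜 : Set (Set ℕ)} (c : ℕ → CantorK) : PsiSpace 𝒜 → PsiX 𝒜 :=
  Sum.map (fun n => (n, c n)) id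

namespace PsiX

variable {𝒜 : Set (Set ℕ)}

def basicNhd (A : ↥𝒜) (n : ℕ) : Set (PsiX 𝒜) :=
  insert (Sum.inr A) (Sum.inl '' {p : ℕ × CantorK | p.1 ∈ (A : Set ℕ) ∧ n ≤ p.1})

theorem isOpen_inl_image_singleton_prod {C : Set CantorK} (hC : IsOpen C) (n : ℕ) :
    IsOpen (Sum.inl '' ({n} ×ˢ C) : Set (PsiX 𝒜)) :=
  isOpen_generateFrom_of_mem (Or.inl ⟨n, C, hC, rfl⟩)

theorem isOpen_basicNhd (A : ↥𝒜) (n : ℕ) : IsOpen (basicNhd A n) :=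
  isOpen_generateFrom_of_mem (Or.inr ⟨A, n, rfl⟩)

theorem continuous_inl : @Continuous (ℕ × CantorK) (PsiX 𝒜) _ _ Sum.inl := by
  refine continuous_generateFrom_iff.2 ?_
  rintro s (⟨n, C, hC, rfl⟩ | ⟨A, n, rfl⟩)
  · convert (isOpen_discrete ({n} : Set ℕ)).prod hC using 1
    exact Sum.inl_injective.preimage_image _
  · convert (isOpen_discrete {k | k ∈ (A : Set ℕ) ∧ n ≤ k}).preimage continuous_fst using 1
    -- The generating sets of `PsiX.topology` type `Sum.inl` into `ℕ × CantorK ⊕ ↥𝒜` rather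
    -- than `PsiX 𝒜`; `simp` only sees through this once the type synonyms are unfolded.
    unfold PsiX
    ext p
    simp

theorem psiCollapse_psiSection (c : ℕ → CantorK) (y : PsiSpace 𝒜) :
    psiCollapse 𝒜 (psiSection c y) = y := by
  cases y <;> rfl

theorem preimage_psiCollapse_singleton_inl (n : ℕ) :
    psiCollapse 𝒜 ⁻¹' {Sum.inl n} = Sum.inl '' ({n} ×ˢ Set.univ) := by
  unfold psiCollapse PsiX PsiSpace
  ext (⟨k, c⟩ | B) <;> simp

theorem eq_inr_of_psiCollapse_eq_inr {x : PsiX 𝒜} {A : ↥𝒜} (h : psiCollapse 𝒜 x = Sum.inr A) :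
    x = Sum.inr A := by
  rcases x with p | B
  · exact absurd h Sum.inl_ne_inr
  · exact congrArg Sum.inr (Sum.inr_injective h)

theorem preimage_psiCollapse_basicNhd (A : ↥𝒜) (n : ℕ) :
    psiCollapse 𝒜 ⁻¹' PsiSpace.basicNhd A n = basicNhd A n := by
  unfold PsiSpace.basicNhd basicNhd psiCollapse PsiX PsiSpace
  ext (⟨k, c⟩ | B) <;> simp

theorem preimage_psiSection_basicNhd (c : ℕ → CantorK) (A : ↥𝒜) (n : ℕ) :
    psiSection c ⁻¹' basicNhd A n = PsiSpace.basicNhd A n := by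
  unfold PsiSpace.basicNhd basicNhd psiSection PsiX PsiSpace
  ext (k | B) <;> simp

theorem continuous_psiCollapse : Continuous (psiCollapse 𝒜) := by
  refine continuous_generateFrom_iff.2 ?_
  rintro s (⟨n, rfl⟩ | ⟨A, n, rfl⟩)
  · rw [preimage_psiCollapse_singleton_inl]
    exact isOpen_inl_image_singleton_prod isOpen_univ n
  · change IsOpen (psiCollapse 𝒜 ⁻¹' PsiSpace.basicNhd A n)
    rw [preimage_psiCollapse_basicNhd]
    exact isOpen_basicNhd A n

theorem continuous_psiSection (c : ℕ → CantorK) : Continuous (psiSection (𝒜 := 𝒜) c) := by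
  refine continuous_generateFrom_iff.2 ?_
  rintro s (⟨n, C, -, rfl⟩ | ⟨A, n, rfl⟩)
  · refine PsiSpace.isOpen_of_subset_range_inl ?_
    rintro (k | B) h
    · exact ⟨k, rfl⟩
    · obtain ⟨p, -, hp⟩ := h
      exact absurd hp Sum.inl_ne_inr
  · change IsOpen (psiSection c ⁻¹' basicNhd A n)
    rw [preimage_psiSection_basicNhd]
    exact PsiSpace.isOpen_basicNhd A n

theorem exists_psiSection_preimage_eq_image (Z : Set (PsiX 𝒜)) :
    ∃ c : ℕ → CantorK, psiSection c ⁻¹' Z = psiCollapse 𝒜 '' Z := by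
  have hpick (n : ℕ) : ∃ c : CantorK, (∃ c', Sum.inl (n, c') ∈ Z) → Sum.inl (n, c) ∈ Z := by
    by_cases h : ∃ c', Sum.inl (n, c') ∈ Z
    · obtain ⟨c', hc'⟩ := h
      exact ⟨c', fun _ => hc'⟩
    · exact ⟨fun _ => false, fun h' => absurd h' h⟩
  choose c hc using hpick
  refine ⟨c, Set.ext fun y => ⟨fun hy => ⟨_, hy, psiCollapse_psiSection c y⟩, ?_⟩⟩
  rintro ⟨⟨n, c'⟩ | A, hx, rfl⟩
  · exact hc n ⟨c', hx⟩
  · exact hx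

theorem isClosedMap_psiCollapse : IsClosedMap (psiCollapse 𝒜) := fun C hC => by
  obtain ⟨c, hc⟩ := exists_psiSection_preimage_eq_image C
  rw [← hc]
  exact hC.preimage (continuous_psiSection c)

theorem isProperMap_psiCollapse : IsProperMap (psiCollapse 𝒜) := by
  refine isProperMap_iff_isClosedMap_and_compact_fibers.2
    ⟨continuous_psiCollapse, isClosedMap_psiCollapse, ?_⟩
  rintro (n | A)
  · convert (isCompact_singleton.prod isCompact_univ).image continuous_inl using 1
    exact preimage_psiCollapse_singleton_inl n
  · exact ((Set.finite_singleton _).subset fun x hx => eq_inr_of_psiCollapse_eq_inr hx).isCompact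

theorem _root_.IsZeroSet.image_psiCollapse {Z : Set (PsiX 𝒜)} (hZ : IsZeroSet Z) :
    IsZeroSet (psiCollapse 𝒜 '' Z) := by
  obtain ⟨c, hc⟩ := exists_psiSection_preimage_eq_image Z
  rw [← hc]
  exact hZ.preimage (continuous_psiSection c)

theorem inter_image_psiCollapse_subset_range_inl {Z₀ Z₁ : Set (PsiX 𝒜)}
    (h : Disjoint Z₀ Z₁) : psiCollapse 𝒜 '' Z₀ ∩ psiCollapse 𝒜 '' Z₁ ⊆ Set.range Sum.inl := by
  rintro (n | A) ⟨⟨x₀, hx₀, hx₀A⟩, ⟨x₁, hx₁, hx₁A⟩⟩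
  · exact ⟨n, rfl⟩
  · obtain rfl := eq_inr_of_psiCollapse_eq_inr hx₀A
    obtain rfl := eq_inr_of_psiCollapse_eq_inr hx₁A
    exact absurd hx₁ (Set.disjoint_left.1 h hx₀)

end PsiX

/-- If `𝒜` is a Mrówka family (a MAD family whose Ψ-space is almost compact), then the
Cantor-set replacement `X` of `Ψ(𝒜)` is almost compact: of any two disjoint zero-sets
of `X`, at least one is compact. -/
theorem stmt_13 (𝒜 : Set (Set ℕ)) (hmad : MadFamily 𝒜)
    (hac : ∀ Z₀ Z₁ : Set (PsiSpace 𝒜), IsZeroSet Z₀ → IsZeroSet Z₁ →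
      Disjoint Z₀ Z₁ → IsCompact Z₀ ∨ IsCompact Z₁)
    (Z₀ Z₁ : Set (PsiX 𝒜)) (h₀ : IsZeroSet Z₀) (h₁ : IsZeroSet Z₁)
    (hdisj : Disjoint Z₀ Z₁) :
    IsCompact Z₀ ∨ IsCompact Z₁ := by
  set W₀ := psiCollapse 𝒜 '' Z₀
  set W₁ := psiCollapse 𝒜 '' Z₁
  have hW₀ : IsZeroSet W₀ := h₀.image_psiCollapse
  have hW₁ : IsZeroSet W₁ := h₁.image_psiCollapse
  have hDω : W₀ ∩ W₁ ⊆ Set.range Sum.inl := PsiX.inter_image_psiCollapse_subset_range_inl hdisj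
  have hD : IsClopen (W₀ ∩ W₁) :=
    ⟨hW₀.isClosed.inter hW₁.isClosed, PsiSpace.isOpen_of_subset_range_inl hDω⟩
  have hDfin : (W₀ ∩ W₁).Finite :=
    PsiSpace.finite_of_isClosed_of_subset_range_inl hmad.2 hD.isClosed hDω
  have hW₀₁ : IsZeroSet (W₀ \ W₁) := Set.sdiff_self_inter ▸ hW₀.sdiff hD
  have hW₁₀ : IsZeroSet (W₁ \ W₀) := Set.sdiff_inter_self_eq_sdiff ▸ hW₁.sdiff hD
  rcases hac _ _ hW₀₁ hW₁₀ disjoint_sdiff_sdiff with h | h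
  · exact Or.inl <| PsiX.isProperMap_psiCollapse.isCompact_of_isCompact_image h₀.isClosed
      (isCompact_of_isCompact_sdiff h hDfin)
  · exact Or.inr <| PsiX.isProperMap_psiCollapse.isCompact_of_isCompact_image h₁.isClosed
      (isCompact_of_isCompact_sdiff h (Set.inter_comm W₀ W₁ ▸ hDfin))
end

section
/- Let X be a locally Lindelöf regular space with countable pseudocharacter and countable tightness (ψ(X) = t(X) = ω) and |X| > 𝔠. Then there is a clopen subset U of X with |U| = L(U) = 𝔠. -/
/-!
In a regular space with ψ(X) = ω every point `x` has open neighbourhoods `G x n` whose closures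
meet in `{x}`; with countable tightness this gives `|cl A| ≤ 𝔠` whenever `|A| ≤ 𝔠`, and the
Arhangel'skii–Shapirovskii closing-off argument gives `|C| ≤ 𝔠` for Lindelöf `C`, so `X` is
locally of size `𝔠`.

A recursion of length `𝔠` then builds open sets `V i` of size `≤ 𝔠`, each containing the closure
of the earlier ones and a new point `p i`. Their union `U` has size `𝔠`, is open, and is closed
because `cf 𝔠 > ω` and the tightness is countable. For `L(U) ≥ 𝔠`, let `m < 𝔠`: the subchain
indexed by the regular cardinal `κ = (m + ℵ₀)⁺ ≤ 𝔠` has a closed union `F ⊆ U`, and the points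
`p i` show that its cover by the `V i` has no subcover of size `< κ`; so `m < κ ≤ L(F) ≤ L(U)`.
-/

open Cardinal Set Function Topology
open scoped Ordinal

universe u

/-- The Lindelöf number of a subset: the least cardinal `λ` such that every open
cover has a subcover of cardinality `≤ λ`. -/
noncomputable def lindelofNumber {X : Type} [TopologicalSpace X] (s : Set X) : Cardinal :=
  sInf {κ | ∀ 𝒰 : Set (Set X), (∀ U ∈ 𝒰, IsOpen U) → s ⊆ ⋃₀ 𝒰 →
    ∃ 𝒱 ⊆ 𝒰, Cardinal.mk 𝒱 ≤ κ ∧ s ⊆ ⋃₀ 𝒱}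

theorem mk_iUnion_le_of_le {α ι : Type u} {κ : Cardinal} (hκ : ℵ₀ ≤ κ) {f : ι → Set α}
    (hι : #ι ≤ κ) (hf : ∀ i, #(f i) ≤ κ) : #(⋃ i, f i) ≤ κ :=
  (mk_iUnion_le f).trans (mul_le_of_le hκ hι (ciSup_le' hf))

theorem mk_countable_subsets_le_continuum {α : Type u} {A : Set α} (hA : #A ≤ 𝔠) :
    #{B : Set α // B ⊆ A ∧ #B ≤ ℵ₀} ≤ 𝔠 :=
  calc #{B : Set α // B ⊆ A ∧ #B ≤ ℵ₀} ≤ max #A ℵ₀ ^ ℵ₀ := mk_bounded_subset_le A ℵ₀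
    _ ≤ 𝔠 ^ ℵ₀ := power_le_power_right (max_le hA aleph0_le_continuum)
    _ = 𝔠 := continuum_power_aleph0

theorem Order.exists_forall_lt_of_mk_lt_cof {ι : Type u} [LinearOrder ι] {S : Set ι}
    (hS : #S < Order.cof ι) : ∃ a, ∀ b ∈ S, b < a :=
  not_isCofinal_iff.1 fun h => (Order.cof_le h).not_gt hS

theorem aleph0_lt_cof_continuum_toType : ℵ₀ < Order.cof (ord Cardinal.continuum.{u}).ToType := by
  rw [Ordinal.cof_toType, ← two_power_aleph0]
  exact lt_cof_ord_power le_rfl one_lt_two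

theorem mk_Iio_lt_continuum (i : (ord Cardinal.continuum.{u}).ToType) : #(Iio i) < 𝔠 := by
  simpa using mk_Iio_lt i (by simp)

theorem mk_biUnion_Iio_le {ι α : Type u} [LinearOrder ι] {f : ι → Set α} {κ : Cardinal}
    (hκ : ℵ₀ ≤ κ) {i : ι} (hi : #(Iio i) ≤ κ) (hf : ∀ j < i, #(f j) ≤ κ) : #(⋃ j < i, f j) ≤ κ :=
  (mk_biUnion_le f (Iio i)).trans (mul_le_of_le hκ hi (ciSup_le' fun j => hf j j.2))

section TransfiniteIter

variable {ι α : Type u} [LinearOrder ι] [WellFoundedLT ι]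

noncomputable def transfiniteIter (step : Set α → Set α) : ι → Set α :=
  wellFounded_lt.fix fun i rec => step (⋃ (j) (h : j < i), rec j h)

theorem transfiniteIter_eq (step : Set α → Set α) (i : ι) :
    transfiniteIter step i = step (⋃ j < i, transfiniteIter step j) :=
  wellFounded_lt.fix_eq _ i

theorem mk_transfiniteIter_le {step : Set α → Set α} {κ : Cardinal} (hκ : ℵ₀ ≤ κ)
    (hι : ∀ i : ι, #(Iio i) ≤ κ) (hstep : ∀ s : Set α, #s ≤ κ → #(step s) ≤ κ) (i : ι) :
    #(transfiniteIter step i) ≤ κ := by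
  induction i using WellFoundedLT.induction with
  | _ i ih =>
    rw [transfiniteIter_eq]
    exact hstep _ (mk_biUnion_Iio_le hκ (hι i) ih)

end TransfiniteIter

theorem exists_subset_biUnion_lt_of_countable {ι : Type*} {α : Type*} [LinearOrder ι]
    (hι : ℵ₀ < Order.cof ι) {f : ι → Set α} {B : Set α} (hB : B.Countable)
    (hBf : B ⊆ ⋃ i, f i) : ∃ k, B ⊆ ⋃ j < k, f j := by
  choose idx hidx using fun b : B => mem_iUnion.1 (hBf b.2)
  have : Countable B := hB.to_subtype
  obtain ⟨k, hk⟩ := Order.exists_forall_lt_of_mk_lt_cof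
    ((le_aleph0_iff_set_countable.2 (countable_range idx)).trans_lt hι)
  exact ⟨k, fun b hb => mem_biUnion (hk _ (mem_range_self ⟨b, hb⟩)) (hidx ⟨b, hb⟩)⟩

theorem exists_mk_le_continuum_forall_countable_subset {α : Type u} (R : Set α → Set α)
    (hR : ∀ B, B.Countable → #(R B) ≤ 𝔠) :
    ∃ F : Set α, #F ≤ 𝔠 ∧ ∀ B ⊆ F, B.Countable → R B ⊆ F := by
  let step (S : Set α) : Set α := ⋃ B : {B : Set α // B ⊆ S ∧ #B ≤ ℵ₀}, R B
  have hstep (S : Set α) (hS : #S ≤ 𝔠) : #(step S) ≤ 𝔠 :=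
    mk_iUnion_le_of_le aleph0_le_continuum (mk_countable_subsets_le_continuum hS)
      fun B => hR B (le_aleph0_iff_set_countable.1 B.2.2)
  let F : (ord Cardinal.continuum.{u}).ToType → Set α := transfiniteIter step
  refine ⟨⋃ i, F i, mk_iUnion_le_of_le aleph0_le_continuum (by simp)
    (mk_transfiniteIter_le aleph0_le_continuum (fun i => (mk_Iio_lt_continuum i).le) hstep),
    fun B hBF hB => ?_⟩
  obtain ⟨k, hk⟩ := exists_subset_biUnion_lt_of_countable aleph0_lt_cof_continuum_toType hB hBF
  have hRk : R B ⊆ F k := by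
    rw [show F k = _ from transfiniteIter_eq step k]
    exact subset_iUnion_of_subset ⟨B, hk, le_aleph0_iff_set_countable.2 hB⟩ subset_rfl
  exact hRk.trans (subset_iUnion F k)

section Topology

variable {X : Type*} [TopologicalSpace X]

variable (X) in
def HasCountableTightness : Prop :=
  ∀ (x : X) (A : Set X), x ∈ closure A → ∃ B ⊆ A, B.Countable ∧ x ∈ closure B

variable (X) in
def HasCountablePseudocharacter : Prop :=
  ∀ x : X, ∃ G : ℕ → Set X, (∀ n, IsOpen (G n)) ∧ (⋂ n, G n) = {x}

structure IsClosedPseudobase (G : X → ℕ → Set X) : Prop where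
  isOpen : ∀ x n, IsOpen (G x n)
  mem : ∀ x n, x ∈ G x n
  exists_notMem_closure : ∀ ⦃x y⦄, y ≠ x → ∃ n, y ∉ closure (G x n)

theorem HasCountablePseudocharacter.exists_isClosedPseudobase [RegularSpace X]
    (hψ : HasCountablePseudocharacter X) : ∃ G : X → ℕ → Set X, IsClosedPseudobase G := by
  unfold HasCountablePseudocharacter at hψ
  choose G hGo hGx using hψ
  have hmem (x : X) (n : ℕ) : x ∈ G x n := mem_iInter.1 ((hGx x).ge rfl) n
  choose V hV hVG using fun (x : X) (n : ℕ) =>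
    (closed_nhds_basis x).mem_iff.1 ((hGo x n).mem_nhds (hmem x n))
  refine ⟨fun x n => interior (V x n), fun _ _ => isOpen_interior,
    fun x n => mem_interior_iff_mem_nhds.2 (hV x n).1, fun x y hyx => ?_⟩
  obtain ⟨n, hn⟩ : ∃ n, y ∉ G x n := by
    by_contra! h
    exact hyx (by simpa [hGx] using mem_iInter.2 h)
  exact ⟨n, fun hy => hn (hVG x n (closure_minimal interior_subset (hV x n).2 hy))⟩

theorem HasCountableTightness.isClosed_of_forall_countable (ht : HasCountableTightness X)
    {F : Set X} (hF : ∀ B ⊆ F, B.Countable → closure B ⊆ F) : IsClosed F :=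
  closure_subset_iff_isClosed.1 fun x hx =>
    let ⟨B, hBF, hB, hxB⟩ := ht x F hx
    hF B hBF hB hxB

theorem HasCountableTightness.isClosed_iUnion {ι : Type*} [LinearOrder ι]
    (ht : HasCountableTightness X) (hι : ℵ₀ < Order.cof ι) {V : ι → Set X} (hV : Monotone V)
    (hcl : ∀ i, ∃ j, closure (V i) ⊆ V j) : IsClosed (⋃ i, V i) := by
  refine ht.isClosed_of_forall_countable fun B hBV hB => ?_
  obtain ⟨k, hk⟩ := exists_subset_biUnion_lt_of_countable hι hB hBV
  obtain ⟨j, hj⟩ := hcl k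
  have hBk : B ⊆ V k := hk.trans (iUnion₂_subset fun i hi => hV hi.le)
  exact (closure_mono hBk).trans (hj.trans (subset_iUnion V j))

theorem IsClosedPseudobase.mk_closure_le_continuum_of_countable {G : X → ℕ → Set X}
    (hG : IsClosedPseudobase G) {B : Set X} (hB : B.Countable) : #(closure B) ≤ 𝔠 := by
  have hinj : Injective fun x : closure B => fun n => ((↑) : B → X) ⁻¹' G x n := by
    intro x y hxy
    by_contra hne
    obtain ⟨n, hn⟩ := hG.exists_notMem_closure (Subtype.coe_ne_coe.2 (Ne.symm hne))
    have htrace : B ∩ G y n = B ∩ G x n := by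
      simpa only [Subtype.image_preimage_coe] using
        congrArg (fun f => ((↑) '' f n : Set X)) hxy.symm
    have hy : (y : X) ∈ closure (B ∩ G y n) := by
      simpa [inter_comm] using (hG.isOpen y n).inter_closure ⟨hG.mem y n, y.2⟩
    rw [htrace] at hy
    exact hn (closure_mono inter_subset_right hy)
  calc #(closure B) ≤ #(ℕ → Set B) := mk_le_of_injective hinj
    _ = (2 ^ #B) ^ ℵ₀ := by simp [mk_set]
    _ ≤ (2 ^ ℵ₀) ^ ℵ₀ :=
        power_le_power_right (power_le_power_left two_ne_zero (le_aleph0_iff_set_countable.2 hB))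
    _ = 𝔠 := by rw [two_power_aleph0, continuum_power_aleph0]

theorem mk_closure_le_continuum {G : X → ℕ → Set X} (ht : HasCountableTightness X)
    (hG : IsClosedPseudobase G) {A : Set X} (hA : #A ≤ 𝔠) : #(closure A) ≤ 𝔠 := by
  have hsub : closure A ⊆ ⋃ B : {B : Set X // B ⊆ A ∧ #B ≤ ℵ₀}, closure B.1 := fun x hx =>
    let ⟨B, hBA, hB, hxB⟩ := ht x A hx
    mem_iUnion.2 ⟨⟨B, hBA, le_aleph0_iff_set_countable.2 hB⟩, hxB⟩
  exact (mk_le_mk_of_subset hsub).trans <| mk_iUnion_le_of_le aleph0_le_continuum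
    (mk_countable_subsets_le_continuum hA)
    fun B => hG.mk_closure_le_continuum_of_countable (le_aleph0_iff_set_countable.1 B.2.2)

/-- The closing-off argument: `F` is a closed set of size `≤ 𝔠` containing a witness `w s ∈ C`
outside `⋃ (x, n) ∈ s, G x n` for every countable `s ⊆ F × ℕ` for which one exists. A point
`z ∈ C \ F` would make the countably many `G`-sets that cover the Lindelöf set `C ∩ F` while
avoiding `z` such an `s`, and its witness would lie in `C ∩ F` but outside them. -/
theorem IsLindelof.mk_le_continuum {G : X → ℕ → Set X} (ht : HasCountableTightness X)
    (hG : IsClosedPseudobase G) {C : Set X} (hC : IsLindelof C) : #C ≤ 𝔠 := by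
  rcases C.eq_empty_or_nonempty with rfl | ⟨x₀, -⟩
  · simp
  have : Nonempty X := ⟨x₀⟩
  choose! w hw using fun (s : Set (X × ℕ)) (h : (C \ ⋃ p ∈ s, uncurry G p).Nonempty) => h
  obtain ⟨F, hFcard, hF⟩ := exists_mk_le_continuum_forall_countable_subset
    (fun B => closure B ∪ w '' 𝒫 (B ×ˢ Set.univ)) fun B hB => by
      refine (mk_union_le _ _).trans (add_le_of_le aleph0_le_continuum
        (hG.mk_closure_le_continuum_of_countable hB) (mk_image_le.trans ?_))
      rw [mk_powerset, ← two_power_aleph0]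
      exact power_le_power_left two_ne_zero
        (le_aleph0_iff_set_countable.2 (hB.prod countable_univ))
  have hFclosed : IsClosed F := ht.isClosed_of_forall_countable fun B hBF hB =>
    subset_union_left.trans (hF B hBF hB)
  refine (mk_le_mk_of_subset fun z hz => ?_).trans hFcard
  by_contra hzF
  choose! n hn using fun y (hy : z ≠ y) => hG.exists_notMem_closure hy
  obtain ⟨t, htc, htCF, hcov⟩ := (hC.inter_right hFclosed).elim_nhds_subcover
    (fun y => G y (n y)) fun y _ => (hG.isOpen y _).mem_nhds (hG.mem y _)
  let s : Set (X × ℕ) := (fun y => (y, n y)) '' t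
  have hzs : z ∈ C \ ⋃ p ∈ s, uncurry G p := by
    refine ⟨hz, ?_⟩
    simp only [s, biUnion_image, mem_iUnion₂, not_exists]
    exact fun y hy hzy => hn y (fun h => hzF (h ▸ (htCF y hy).2)) (subset_closure hzy)
  obtain ⟨hwC, hwG⟩ := hw s ⟨z, hzs⟩
  have hwF : w s ∈ F := hF t (fun y hy => (htCF y hy).2) htc
    (Or.inr ⟨s, image_subset_iff.2 fun y hy => ⟨hy, trivial⟩, rfl⟩)
  apply hwG
  simpa only [s, biUnion_image, uncurry_apply_pair] using hcov ⟨hwC, hwF⟩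

theorem exists_isOpen_mem_mk_le_continuum {G : X → ℕ → Set X}
    (hlL : ∀ x : X, ∃ U ∈ 𝓝 x, IsLindelof U) (ht : HasCountableTightness X)
    (hG : IsClosedPseudobase G) (x : X) : ∃ O, IsOpen O ∧ x ∈ O ∧ #O ≤ 𝔠 :=
  let ⟨N, hN, hNL⟩ := hlL x
  ⟨interior N, isOpen_interior, mem_interior_iff_mem_nhds.2 hN,
    (mk_le_mk_of_subset interior_subset).trans (hNL.mk_le_continuum ht hG)⟩

end Topology

theorem exists_subcover_mk_le_mk {α : Type u} {s : Set α} {𝒰 : Set (Set α)} (hs : s ⊆ ⋃₀ 𝒰) :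
    ∃ 𝒱 ⊆ 𝒰, #𝒱 ≤ #s ∧ s ⊆ ⋃₀ 𝒱 := by
  choose U hU𝒰 hxU using fun x : s => hs x.2
  exact ⟨range U, range_subset_iff.2 hU𝒰, mk_range_le,
    fun x hx => ⟨U ⟨x, hx⟩, mem_range_self _, hxU ⟨x, hx⟩⟩⟩

section LindelofNumber

variable {X : Type} [TopologicalSpace X]

theorem lindelofNumber_le_mk (s : Set X) : lindelofNumber s ≤ #s :=
  csInf_le' fun _ _ hs => exists_subcover_mk_le_mk hs

theorem exists_subcover_mk_le_lindelofNumber {s : Set X} {𝒰 : Set (Set X)}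
    (h𝒰 : ∀ U ∈ 𝒰, IsOpen U) (hs : s ⊆ ⋃₀ 𝒰) :
    ∃ 𝒱 ⊆ 𝒰, #𝒱 ≤ lindelofNumber s ∧ s ⊆ ⋃₀ 𝒱 := by
  have : lindelofNumber s ∈ {κ | ∀ 𝒰 : Set (Set X), (∀ U ∈ 𝒰, IsOpen U) → s ⊆ ⋃₀ 𝒰 →
      ∃ 𝒱 ⊆ 𝒰, #𝒱 ≤ κ ∧ s ⊆ ⋃₀ 𝒱} :=
    csInf_mem ⟨#s, fun _ _ hs => exists_subcover_mk_le_mk hs⟩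
  exact this 𝒰 h𝒰 hs

theorem lindelofNumber_mono_of_isClosed {F s : Set X} (hF : IsClosed F) (hFs : F ⊆ s) :
    lindelofNumber F ≤ lindelofNumber s := by
  refine csInf_le' fun 𝒰 h𝒰 hF𝒰 => ?_
  have hs : s ⊆ ⋃₀ insert Fᶜ 𝒰 := fun x hx => by
    by_cases hxF : x ∈ F
    · obtain ⟨U, hU, hxU⟩ := hF𝒰 hxF
      exact ⟨U, mem_insert_of_mem _ hU, hxU⟩
    · exact ⟨Fᶜ, mem_insert _ _, hxF⟩
  obtain ⟨𝒱, h𝒱, h𝒱card, hs𝒱⟩ := exists_subcover_mk_le_lindelofNumber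
    (forall_mem_insert.2 ⟨hF.isOpen_compl, h𝒰⟩) hs
  refine ⟨𝒱 \ {Fᶜ}, sdiff_singleton_subset_iff.2 h𝒱,
    (mk_le_mk_of_subset sdiff_subset).trans h𝒱card, fun x hx => ?_⟩
  obtain ⟨V, hV, hxV⟩ := hs𝒱 (hFs hx)
  exact ⟨V, ⟨hV, fun hVF => (hVF ▸ hxV) hx⟩, hxV⟩

theorem cof_le_lindelofNumber_iUnion {ι : Type} [LinearOrder ι] {V : ι → Set X}
    (hV : ∀ i, IsOpen (V i)) {p : ι → X} (hp : ∀ i, p i ∈ V i)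
    (hpV : ∀ ⦃i j⦄, j < i → p i ∉ V j) : Order.cof ι ≤ lindelofNumber (⋃ i, V i) := by
  obtain ⟨𝒱, h𝒱V, h𝒱card, hcov⟩ := exists_subcover_mk_le_lindelofNumber
    (forall_mem_range.2 hV) (sUnion_range V).ge
  choose idx hidx using fun v : 𝒱 => h𝒱V v.2
  have hcofinal : IsCofinal (range idx) := fun i => by
    obtain ⟨v, hv, hpv⟩ := hcov (mem_iUnion.2 ⟨i, hp i⟩)
    refine ⟨idx ⟨v, hv⟩, mem_range_self _, not_lt.1 fun hlt => hpV hlt ?_⟩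
    rwa [hidx]
  exact (Order.cof_le hcofinal).trans (mk_range_le.trans h𝒱card)

end LindelofNumber

section Chain

variable {X : Type} [TopologicalSpace X] {ι : Type} [LinearOrder ι] {V : ι → Set X} {p : ι → X}

structure IsSeparatedOpenChain (V : ι → Set X) (p : ι → X) : Prop where
  isOpen : ∀ i, IsOpen (V i)
  closure_subset : ∀ ⦃i j⦄, i < j → closure (V i) ⊆ V j
  mem : ∀ i, p i ∈ V i
  notMem : ∀ ⦃i j⦄, j < i → p i ∉ V j

namespace IsSeparatedOpenChain

theorem monotone (h : IsSeparatedOpenChain V p) : Monotone V := fun _ _ hij =>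
  hij.eq_or_lt.elim (fun h' => h' ▸ subset_rfl) fun h' => subset_closure.trans (h.closure_subset h')

theorem injective (h : IsSeparatedOpenChain V p) : Injective p :=
  Injective.of_lt_imp_ne fun i _ hij hp => h.notMem hij (hp ▸ h.mem i)

theorem comp (h : IsSeparatedOpenChain V p) {κ : Type} [LinearOrder κ] {e : κ → ι}
    (he : StrictMono e) : IsSeparatedOpenChain (V ∘ e) (p ∘ e) :=
  ⟨fun _ => h.isOpen _, fun _ _ hab => h.closure_subset (he hab), fun _ => h.mem _,
    fun _ _ hab => h.notMem (he hab)⟩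

theorem isClosed_iUnion (h : IsSeparatedOpenChain V p) (ht : HasCountableTightness X)
    (hι : ℵ₀ < Order.cof ι) : IsClosed (⋃ i, V i) :=
  ht.isClosed_iUnion hι h.monotone fun i =>
    let ⟨j, hj⟩ := Order.exists_forall_lt_of_mk_lt_cof (S := {i}) (by
      simpa using one_lt_aleph0.trans hι)
    ⟨j, h.closure_subset (hj i rfl)⟩

theorem cof_le_lindelofNumber_of_strictMono (h : IsSeparatedOpenChain V p)
    (ht : HasCountableTightness X) {κ : Type} [LinearOrder κ] (hκ : ℵ₀ < Order.cof κ)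
    {e : κ → ι} (he : StrictMono e) : Order.cof κ ≤ lindelofNumber (⋃ i, V i) :=
  (cof_le_lindelofNumber_iUnion (h.comp he).isOpen (h.comp he).mem (h.comp he).notMem).trans
    (lindelofNumber_mono_of_isClosed ((h.comp he).isClosed_iUnion ht hκ)
      (iUnion_subset fun a => subset_iUnion V (e a)))

variable {V : (ord 𝔠).ToType → Set X} {p : (ord 𝔠).ToType → X}

theorem mk_iUnion_eq_continuum (h : IsSeparatedOpenChain V p) (hV : ∀ i, #(V i) ≤ 𝔠) :
    #(⋃ i, V i) = 𝔠 := by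
  refine le_antisymm (mk_iUnion_le_of_le aleph0_le_continuum (by simp) hV) ?_
  have hinj : Injective fun i => (⟨p i, mem_iUnion.2 ⟨i, h.mem i⟩⟩ : ⋃ i, V i) :=
    fun i j hij => h.injective (congrArg Subtype.val hij)
  simpa only [mk_toType, card_ord] using mk_le_of_injective hinj

theorem continuum_le_lindelofNumber (h : IsSeparatedOpenChain V p)
    (ht : HasCountableTightness X) : 𝔠 ≤ lindelofNumber (⋃ i, V i) := by
  refine le_of_forall_lt fun m hm => ?_
  -- `𝔠` may be singular, so a small subcover is only bounded in a chain of regular length.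
  set κ := Order.succ (max m ℵ₀)
  have hcof : Order.cof (ord κ).ToType = κ := by
    rw [Ordinal.cof_toType, (isRegular_succ (le_max_right _ _)).cof_ord]
  have hℵ : ℵ₀ < Order.cof (ord κ).ToType := by
    rw [hcof]
    exact Order.lt_succ_of_le (le_max_right _ _)
  obtain ⟨e⟩ : Nonempty ((ord κ).ToType ≤i (ord 𝔠).ToType) := by
    rw [← Ordinal.type_le_iff, Ordinal.type_toType, Ordinal.type_toType, ord_le_ord]
    exact Order.succ_le_of_lt (max_lt hm aleph0_lt_continuum)
  have hL := h.cof_le_lindelofNumber_of_strictMono ht hℵ e.strictMono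
  rw [hcof] at hL
  exact (Order.lt_succ_of_le (le_max_left _ _)).trans_le hL

end IsSeparatedOpenChain

theorem exists_isOpen_closure_subset_not_subset (hcl : ∀ A : Set X, #A ≤ 𝔠 → #(closure A) ≤ 𝔠)
    (hloc : ∀ x : X, ∃ O, IsOpen O ∧ x ∈ O ∧ #O ≤ 𝔠) (hX : 𝔠 < #X) {S : Set X}
    (hS : #S ≤ 𝔠) : ∃ O, IsOpen O ∧ closure S ⊆ O ∧ #O ≤ 𝔠 ∧ ∃ y ∈ O, y ∉ closure S := by
  obtain ⟨y, -, hy⟩ := not_subset.1 fun h : (univ : Set X) ⊆ closure S =>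
    (hX.trans_le (mk_univ.ge.trans ((mk_le_mk_of_subset h).trans (hcl S hS)))).false
  choose O hO hxO hOcard using hloc
  refine ⟨⋃ x ∈ insert y (closure S), O x, isOpen_biUnion fun x _ => hO x,
    fun x hx => mem_biUnion (mem_insert_of_mem y hx) (hxO x), ?_,
    y, mem_biUnion (mem_insert y _) (hxO y), hy⟩
  refine (mk_biUnion_le _ _).trans
    (mul_le_of_le aleph0_le_continuum ?_ (ciSup_le' fun x => hOcard x))
  exact mk_insert_le.trans (add_le_of_le aleph0_le_continuum (hcl S hS)
    (one_le_aleph0.trans aleph0_le_continuum))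

theorem exists_isSeparatedOpenChain (hcl : ∀ A : Set X, #A ≤ 𝔠 → #(closure A) ≤ 𝔠)
    (hloc : ∀ x : X, ∃ O, IsOpen O ∧ x ∈ O ∧ #O ≤ 𝔠) (hX : 𝔠 < #X) :
    ∃ (V : (ord 𝔠).ToType → Set X) (p : (ord 𝔠).ToType → X),
      IsSeparatedOpenChain V p ∧ ∀ i, #(V i) ≤ 𝔠 := by
  have : Nonempty X := mk_ne_zero_iff.1 (ne_bot_of_gt hX)
  choose! O hO hSO hOcard y hyO hyS using fun (S : Set X) (hS : #S ≤ 𝔠) =>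
    exists_isOpen_closure_subset_not_subset hcl hloc hX hS
  let V : (ord 𝔠).ToType → Set X := transfiniteIter O
  have hVcard (i) : #(V i) ≤ 𝔠 :=
    mk_transfiniteIter_le aleph0_le_continuum (fun i => (mk_Iio_lt_continuum i).le) hOcard i
  have hD (i) : #(⋃ j < i, V j) ≤ 𝔠 :=
    mk_biUnion_Iio_le aleph0_le_continuum (mk_Iio_lt_continuum i).le fun j _ => hVcard j
  have hV (i) : V i = O (⋃ j < i, V j) := transfiniteIter_eq O i
  refine ⟨V, fun i => y (⋃ j < i, V j), ⟨fun i => hV i ▸ hO _ (hD i), fun i j hij => ?_,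
    fun i => hV i ▸ hyO _ (hD i), fun i j hji hyV => ?_⟩, hVcard⟩
  · have hVi : V i ⊆ ⋃ k < j, V k := fun x hx => mem_biUnion hij hx
    rw [hV j]
    exact (closure_mono hVi).trans (hSO _ (hD j))
  · exact hyS _ (hD i) (subset_closure (mem_biUnion hji hyV))

end Chain

/-- If `X` is a locally Lindelöf regular space with countable pseudocharacter and
countable tightness and `|X| > 𝔠`, then `X` has a clopen subset `U` with
`|U| = L(U) = 𝔠`. -/
theorem stmt_17 (X : Type) [TopologicalSpace X] [RegularSpace X]
    (hlL : ∀ x : X, ∃ U ∈ nhds x, IsLindelof U)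
    (hpsi : ∀ x : X, ∃ G : ℕ → Set X, (∀ n, IsOpen (G n)) ∧ (⋂ n, G n) = {x})
    (ht : ∀ (x : X) (A : Set X), x ∈ closure A →
      ∃ B ⊆ A, B.Countable ∧ x ∈ closure B)
    (hX : Cardinal.continuum < Cardinal.mk X) :
    ∃ U : Set X, IsClopen U ∧ Cardinal.mk U = Cardinal.continuum ∧
      lindelofNumber U = Cardinal.continuum := by
  obtain ⟨G, hG⟩ := HasCountablePseudocharacter.exists_isClosedPseudobase hpsi
  obtain ⟨V, p, hVp, hVcard⟩ := exists_isSeparatedOpenChain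
    (fun A => mk_closure_le_continuum ht hG) (exists_isOpen_mem_mk_le_continuum hlL ht hG) hX
  have hcard := hVp.mk_iUnion_eq_continuum hVcard
  refine ⟨⋃ i, V i, ⟨hVp.isClosed_iUnion ht aleph0_lt_cof_continuum_toType,
    isOpen_iUnion hVp.isOpen⟩, hcard, ?_⟩
  exact le_antisymm ((lindelofNumber_le_mk _).trans hcard.le)
    (hVp.continuum_le_lindelofNumber ht)
end
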